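/- arXiv:1106.3414 — 3 statements merged into one kernel-verified Lean document; each statement's English description precedes it below -/
import Mathlib

section
/- Let f : ℝ → ℝ be C² and α : [0,2π] → ℝ be C². Suppose that for every C² function β : [0,2π] → ℝ with β(0)=β(2π)=0 satisfying ∫₀^{2π} sin(α(t)) β(t) dt = 0 and ∫₀^{2π} cos(α(t)) β(t) dt = 0, we have ∫₀^{2π} f''(α'(t)) α''(t) β(t) dt = 0. Then there exist constants C₁, C₂ ∈ ℝ such that f''(α'(t)) α''(t) = C₁ cos(α(t)) + C₂ sin(α(t)) for all t ∈ [0,2π]. -/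
/-!
Write `g = f''(α') α''` and `φ₁, φ₂ = sin α, cos α`. The functional `β ↦ ∫ g β` on test
functions vanishes on the common kernel of the finitely many functionals `β ↦ ∫ φᵢ β`, so it is a
linear combination `∑ cᵢ ∫ φᵢ β` of them (Lagrange multipliers in linear algebra). Then
`g - ∑ cᵢ φᵢ` integrates to zero against every smooth function compactly supported in the open
interval, so it vanishes there almost everywhere by the fundamental lemma of the calculus of
variations, hence everywhere on the closed interval by continuity.
-/

open Real intervalIntegral Set MeasureTheory
open scoped ContDiff

def smoothTestFunctions (a b : ℝ) : Submodule ℝ (ℝ → ℝ) where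
  carrier := {β | ContDiff ℝ ∞ β ∧ tsupport β ⊆ Ioo a b}
  add_mem' hβ hγ := ⟨hβ.1.add hγ.1, (tsupport_add _ _).trans (union_subset hβ.2 hγ.2)⟩
  zero_mem' := ⟨contDiff_const, by rw [tsupport_zero]; exact empty_subset _⟩
  smul_mem' c _ hβ := ⟨contDiff_const.smul hβ.1,
    (closure_mono (Function.support_const_smul_subset c _)).trans hβ.2⟩

namespace smoothTestFunctions

variable {a b : ℝ} {β : ℝ → ℝ}

theorem apply_eq_zero (hβ : β ∈ smoothTestFunctions a b) {x : ℝ} (hx : x ∉ Ioo a b) :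
    β x = 0 :=
  image_eq_zero_of_notMem_tsupport fun hx' ↦ hx (hβ.2 hx')

theorem intervalIntegrable_mul {φ : ℝ → ℝ} (hφ : IntervalIntegrable φ volume a b)
    (hβ : β ∈ smoothTestFunctions a b) : IntervalIntegrable (fun t ↦ φ t * β t) volume a b :=
  hφ.mul_continuousOn hβ.1.continuous.continuousOn

theorem integral_smul_eq_intervalIntegral_mul (hab : a ≤ b) (hβ : β ∈ smoothTestFunctions a b)
    (φ : ℝ → ℝ) : ∫ x, β x • φ x = ∫ t in a..b, φ t * β t := by
  rw [integral_of_le hab, ← setIntegral_eq_integral_of_forall_compl_eq_zero fun x hx ↦ by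
    rw [apply_eq_zero hβ fun hx' ↦ hx (Ioo_subset_Ioc_self hx'), zero_smul]]
  simp only [smul_eq_mul, mul_comm]

noncomputable def integralMul (φ : ℝ → ℝ) (hφ : IntervalIntegrable φ volume a b) :
    smoothTestFunctions a b →ₗ[ℝ] ℝ where
  toFun β := ∫ t in a..b, φ t * β.1 t
  map_add' β γ := by
    simp only [Submodule.coe_add, Pi.add_apply, mul_add]
    exact integral_add (intervalIntegrable_mul hφ β.2) (intervalIntegrable_mul hφ γ.2)
  map_smul' c β := by
    simp only [Submodule.coe_smul, Pi.smul_apply, smul_eq_mul, RingHom.id_apply,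
      mul_left_comm _ c, intervalIntegral.integral_const_mul]

end smoothTestFunctions

open smoothTestFunctions

theorem exists_integral_mul_eq_of_forall_integral_mul_eq_zero {ι : Type*} [Fintype ι]
    {a b : ℝ} {g : ℝ → ℝ} {φ : ι → ℝ → ℝ} (hg : IntervalIntegrable g volume a b)
    (hφ : ∀ i, IntervalIntegrable (φ i) volume a b)
    (h : ∀ β ∈ smoothTestFunctions a b, (∀ i, ∫ t in a..b, φ i t * β t = 0) →
      ∫ t in a..b, g t * β t = 0) :
    ∃ c : ι → ℝ, ∀ β ∈ smoothTestFunctions a b,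
      ∫ t in a..b, g t * β t = ∫ t in a..b, (∑ i, c i * φ i t) * β t := by
  have hker :
      ⨅ i, LinearMap.ker (integralMul (φ i) (hφ i)) ≤ LinearMap.ker (integralMul g hg) := by
    intro β hβ
    simp only [Submodule.mem_iInf, LinearMap.mem_ker] at hβ ⊢
    exact h β β.2 hβ
  obtain ⟨c, hc⟩ :=
    (Submodule.mem_span_range_iff_exists_fun ℝ).1 (mem_span_of_iInf_ker_le_ker hker)
  refine ⟨c, fun β hβ ↦ ?_⟩
  have hcβ := LinearMap.congr_fun hc ⟨β, hβ⟩
  simp only [LinearMap.sum_apply, LinearMap.smul_apply, smul_eq_mul] at hcβ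
  simp only [Finset.sum_mul, mul_assoc]
  rw [integral_finsetSum fun i _ ↦ (intervalIntegrable_mul (hφ i) hβ).const_mul (c i)]
  simp only [intervalIntegral.integral_const_mul]
  exact hcβ.symm

theorem eqOn_Icc_of_integral_mul_eq {a b : ℝ} (hab : a < b) {g k : ℝ → ℝ}
    (hg : ContinuousOn g (Icc a b)) (hk : ContinuousOn k (Icc a b))
    (h : ∀ β ∈ smoothTestFunctions a b, ∫ t in a..b, g t * β t = ∫ t in a..b, k t * β t) :
    EqOn g k (Icc a b) := by
  have hgk : ContinuousOn (g - k) (Icc a b) := hg.sub hk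
  have hae : ∀ᵐ x, x ∈ Ioo a b → (g - k) x = 0 := by
    refine isOpen_Ioo.ae_eq_zero_of_integral_contDiff_smul_eq_zero
      ((hgk.mono Ioo_subset_Icc_self).locallyIntegrableOn measurableSet_Ioo) ?_
    intro β hβ _ hβU
    have hβ : β ∈ smoothTestFunctions a b := ⟨hβ, hβU⟩
    rw [integral_smul_eq_intervalIntegral_mul hab.le hβ]
    simp only [Pi.sub_apply, sub_mul]
    rw [integral_sub ((hg.intervalIntegrable_of_Icc hab.le).mul_continuousOn
        hβ.1.continuous.continuousOn) ((hk.intervalIntegrable_of_Icc hab.le).mul_continuousOn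
        hβ.1.continuous.continuousOn), h β hβ, sub_self]
  have hae' : g =ᵐ[volume.restrict (Icc a b)] k := by
    rw [← restrict_Ioo_eq_restrict_Icc, Filter.EventuallyEq, ae_restrict_iff' measurableSet_Ioo]
    filter_upwards [hae] with x hx hxI
    exact sub_eq_zero.1 (hx hxI)
  refine Measure.eqOn_of_ae_eq hae' hg hk ?_
  rw [interior_Icc, closure_Ioo hab.ne]

theorem euler_lagrange_uniformization
    (f α : ℝ → ℝ) (hf : ContDiff ℝ 2 f) (hα : ContDiff ℝ 2 α)
    (hcrit : ∀ β : ℝ → ℝ, ContDiff ℝ 2 β → β 0 = 0 → β (2*π) = 0 →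
      (∫ t in (0:ℝ)..(2*π), Real.sin (α t) * β t) = 0 →
      (∫ t in (0:ℝ)..(2*π), Real.cos (α t) * β t) = 0 →
      (∫ t in (0:ℝ)..(2*π), deriv (deriv f) (deriv α t) * deriv (deriv α) t * β t) = 0) :
    ∃ C₁ C₂ : ℝ, ∀ t ∈ Set.Icc (0:ℝ) (2*π),
      deriv (deriv f) (deriv α t) * deriv (deriv α) t
        = C₁ * Real.cos (α t) + C₂ * Real.sin (α t) := by
  set φ : Fin 2 → ℝ → ℝ := ![fun t ↦ sin (α t), fun t ↦ cos (α t)]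
  have hφ : ∀ i, Continuous (φ i) :=
    Fin.forall_fin_two.2 ⟨continuous_sin.comp hα.continuous, continuous_cos.comp hα.continuous⟩
  have hg : Continuous fun t ↦ deriv (deriv f) (deriv α t) * deriv (deriv α) t :=
    ((hf.deriv' (n := 1)).continuous_deriv_one.comp (hα.continuous_deriv one_le_two)).mul
      (hα.deriv' (n := 1)).continuous_deriv_one
  obtain ⟨c, hc⟩ := exists_integral_mul_eq_of_forall_integral_mul_eq_zero
    (hg.intervalIntegrable _ _) (fun i ↦ (hφ i).intervalIntegrable _ _)
    fun β hβ hβφ ↦ hcrit β (hβ.1.of_le (WithTop.coe_le_coe.2 le_top))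
      (apply_eq_zero hβ (by simp)) (apply_eq_zero hβ (by simp)) (hβφ 0) (hβφ 1)
  refine ⟨c 1, c 0, fun t ht ↦ ?_⟩
  have hk : Continuous fun t ↦ ∑ i, c i * φ i t := by fun_prop
  have := eqOn_Icc_of_integral_mul_eq (by positivity) hg.continuousOn hk.continuousOn hc ht
  simpa [φ, Fin.sum_univ_two, add_comm] using this
end

section
/- For f(x) = x², any critical point α of the constrained variational problem satisfies the pendulum equation: there exist constants C₁, C₂ with α''(t) = (C₁/2) cos(α(t)) + (C₂/2) sin(α(t)), and after a suitable shift α̃(t) = α(t) + φ₀ (rotation of the plane), there exists ω ≥ 0 such that α̃'' + ω² sin(α̃) = 0. -/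
/-!
The Euler–Lagrange equation with multipliers: the first variation `∫ 2 α'' β` vanishes on the common
kernel of the two constraint functionals `β ↦ ∫ sin α · β` and `β ↦ ∫ cos α · β`, so it is a linear
combination of them; the fundamental lemma of the calculus of variations then turns this identity of
functionals into the pointwise equation `2 α'' = C₁ cos α + C₂ sin α`. Writing
`-(C₁ cos x + C₂ sin x) / 2 = r sin (x + φ₀)` with `r = √(C₁² + C₂²) / 2` and `φ₀` the argument of
`-(C₂ + C₁ i)` gives the pendulum equation with `ω² = r`.
-/

open Real intervalIntegral Set MeasureTheory

open scoped ContDiff in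
theorem eqOn_zero_of_forall_integral_mul_eq_zero {a b : ℝ} (hab : a < b) {n : WithTop ℕ∞}
    (hn : n ≤ ∞) {h : ℝ → ℝ} (hh : Continuous h)
    (H : ∀ β : ℝ → ℝ, ContDiff ℝ n β → β a = 0 → β b = 0 → ∫ t in a..b, h t * β t = 0) :
    EqOn h 0 (Icc a b) := by
  have hIoo : EqOn h 0 (Ioo a b) := by
    have hae : ∀ᵐ x, x ∈ Ioo a b → h x = 0 :=
      isOpen_Ioo.ae_eq_zero_of_integral_contDiff_smul_eq_zero
        (hh.locallyIntegrable.locallyIntegrableOn _) fun g hg _ hsupp => by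
          have hg0 : ∀ x ∉ Ioo a b, g x = 0 := fun x hx =>
            image_eq_zero_of_notMem_tsupport fun hx' => hx (hsupp hx')
          calc ∫ x, g x • h x = ∫ x in a..b, h x * g x := by
                rw [integral_of_le hab.le, setIntegral_eq_integral_of_forall_compl_eq_zero]
                · simp only [smul_eq_mul, mul_comm]
                · intro x hx
                  simp [hg0 x fun hx' => hx (Ioo_subset_Ioc_self hx')]
            _ = 0 := H g (hg.of_le hn) (hg0 a (by simp)) (hg0 b (by simp))
    exact Measure.eqOn_open_of_ae_eq ((ae_restrict_iff' measurableSet_Ioo).2 hae) isOpen_Ioo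
      hh.continuousOn continuousOn_const
  rw [← closure_Ioo hab.ne]
  exact hIoo.closure hh continuous_const

def contDiffVanishingAt (a b : ℝ) (n : WithTop ℕ∞) : Submodule ℝ (ℝ → ℝ) where
  carrier := {β | ContDiff ℝ n β ∧ β a = 0 ∧ β b = 0}
  add_mem' hβ hγ := ⟨hβ.1.add hγ.1, by simp [hβ.2.1, hγ.2.1], by simp [hβ.2.2, hγ.2.2]⟩
  zero_mem' := ⟨contDiff_const, rfl, rfl⟩
  smul_mem' c _ hβ := ⟨contDiff_const.smul hβ.1, by simp [hβ.2.1], by simp [hβ.2.2]⟩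

noncomputable def integralMulLinearMap {a b : ℝ} {n : WithTop ℕ∞} (w : ℝ → ℝ)
    (hw : Continuous w) : contDiffVanishingAt a b n →ₗ[ℝ] ℝ where
  toFun β := ∫ t in a..b, w t * β.1 t
  map_add' β γ := by
    simp only [Submodule.coe_add, Pi.add_apply, mul_add]
    exact intervalIntegral.integral_add ((hw.mul β.2.1.continuous).intervalIntegrable _ _)
      ((hw.mul γ.2.1.continuous).intervalIntegrable _ _)
  map_smul' c β := by
    simp only [SetLike.val_smul, Pi.smul_apply, smul_eq_mul, mul_left_comm _ c,
      intervalIntegral.integral_const_mul, RingHom.id_apply]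

theorem exists_forall_integral_sub_sum_mul_eq_zero {ι : Type*} [Fintype ι] {a b : ℝ}
    {n : WithTop ℕ∞} {w : ι → ℝ → ℝ} (hw : ∀ i, Continuous (w i)) {g : ℝ → ℝ}
    (hg : Continuous g)
    (H : ∀ β : ℝ → ℝ, ContDiff ℝ n β → β a = 0 → β b = 0 →
      (∀ i, ∫ t in a..b, w i t * β t = 0) → ∫ t in a..b, g t * β t = 0) :
    ∃ c : ι → ℝ, ∀ β : ℝ → ℝ, ContDiff ℝ n β → β a = 0 → β b = 0 →
      ∫ t in a..b, (g t - ∑ i, c i * w i t) * β t = 0 := by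
  have hker : ⨅ i, LinearMap.ker (integralMulLinearMap (a := a) (b := b) (n := n) (w i) (hw i)) ≤
      LinearMap.ker (integralMulLinearMap g hg) := fun β hβ => by
    simp only [Submodule.mem_iInf, LinearMap.mem_ker] at hβ ⊢
    exact H β.1 β.2.1 β.2.2.1 β.2.2.2 hβ
  obtain ⟨c, hc⟩ :=
    (Submodule.mem_span_range_iff_exists_fun ℝ).1 (mem_span_of_iInf_ker_le_ker hker)
  refine ⟨c, fun β hβ ha hb => ?_⟩
  have hsum := LinearMap.congr_fun hc ⟨β, hβ, ha, hb⟩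
  simp only [LinearMap.sum_apply, LinearMap.smul_apply, smul_eq_mul] at hsum
  have hterm : ∀ i, Continuous fun t => c i * (w i t * β t) :=
    fun i => continuous_const.mul ((hw i).mul hβ.continuous)
  have hgβ : IntervalIntegrable (fun t => g t * β t) volume a b :=
    (hg.mul hβ.continuous).intervalIntegrable _ _
  simp only [sub_mul, Finset.sum_mul, mul_assoc]
  rw [intervalIntegral.integral_sub hgβ, intervalIntegral.integral_finsetSum]
  · simp only [intervalIntegral.integral_const_mul]
    exact sub_eq_zero.2 hsum.symm
  · exact fun i _ => (hterm i).intervalIntegrable _ _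
  · exact (continuous_finsetSum _ fun i _ => hterm i).intervalIntegrable _ _

open scoped ContDiff in
theorem exists_eq_sum_mul_of_forall_integral_mul_eq_zero {ι : Type*} [Fintype ι] {a b : ℝ}
    (hab : a < b) {n : WithTop ℕ∞} (hn : n ≤ ∞) {w : ι → ℝ → ℝ} (hw : ∀ i, Continuous (w i))
    {g : ℝ → ℝ} (hg : Continuous g)
    (H : ∀ β : ℝ → ℝ, ContDiff ℝ n β → β a = 0 → β b = 0 →
      (∀ i, ∫ t in a..b, w i t * β t = 0) → ∫ t in a..b, g t * β t = 0) :
    ∃ c : ι → ℝ, ∀ t ∈ Icc a b, g t = ∑ i, c i * w i t := by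
  obtain ⟨c, hc⟩ := exists_forall_integral_sub_sum_mul_eq_zero hw hg H
  have hcont : Continuous fun t => g t - ∑ i, c i * w i t :=
    hg.sub (continuous_finsetSum _ fun i _ => continuous_const.mul (hw i))
  exact ⟨c, fun t ht => sub_eq_zero.1 (eqOn_zero_of_forall_integral_mul_eq_zero hab hn hcont hc ht)⟩

theorem exists_mul_cos_add_mul_sin_eq (a b : ℝ) :
    ∃ r φ : ℝ, 0 ≤ r ∧ ∀ x, a * cos x + b * sin x = r * sin (x + φ) :=
  ⟨‖(⟨b, a⟩ : ℂ)‖, Complex.arg ⟨b, a⟩, norm_nonneg _, fun x => by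
    rw [sin_add]
    linear_combination (-sin x) * Complex.norm_mul_cos_arg ⟨b, a⟩ -
      cos x * Complex.norm_mul_sin_arg ⟨b, a⟩⟩

theorem critical_point_pendulum_equation
    (α : ℝ → ℝ) (hα : ContDiff ℝ 2 α)
    (hcrit : ∀ β : ℝ → ℝ, ContDiff ℝ 2 β → β 0 = 0 → β (2*π) = 0 →
      (∫ t in (0:ℝ)..(2*π), Real.sin (α t) * β t) = 0 →
      (∫ t in (0:ℝ)..(2*π), Real.cos (α t) * β t) = 0 →
      (∫ t in (0:ℝ)..(2*π), 2 * deriv (deriv α) t * β t) = 0) :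
    (∃ C₁ C₂ : ℝ, ∀ t ∈ Set.Icc (0:ℝ) (2*π),
      deriv (deriv α) t = C₁ / 2 * Real.cos (α t) + C₂ / 2 * Real.sin (α t)) ∧
    (∃ φ₀ ω : ℝ, 0 ≤ ω ∧ ∀ t ∈ Set.Icc (0:ℝ) (2*π),
      deriv (deriv (fun s => α s + φ₀)) t + ω^2 * Real.sin (α t + φ₀) = 0) := by
  have hαc : Continuous α := hα.continuous
  obtain ⟨c, hc⟩ := exists_eq_sum_mul_of_forall_integral_mul_eq_zero
    (w := ![fun t => sin (α t), fun t => cos (α t)]) (g := fun t => 2 * deriv (deriv α) t)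
    two_pi_pos ENat.LEInfty.out
    (Fin.forall_fin_two.2 ⟨continuous_sin.comp hαc, continuous_cos.comp hαc⟩)
    (continuous_const.mul (hα.iterate_deriv' 0 2).continuous)
    fun β hβ h0 h2 hw => hcrit β hβ h0 h2 (hw 0) (hw 1)
  have hode : ∀ t ∈ Icc 0 (2 * π),
      deriv (deriv α) t = c 1 / 2 * cos (α t) + c 0 / 2 * sin (α t) := fun t ht => by
    have h2 := hc t ht
    simp only [Fin.sum_univ_two, Matrix.cons_val_zero, Matrix.cons_val_one] at h2
    linarith
  obtain ⟨r, φ₀, hr, hrot⟩ := exists_mul_cos_add_mul_sin_eq (-(c 1 / 2)) (-(c 0 / 2))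
  refine ⟨⟨c 1, c 0, hode⟩, φ₀, √r, sqrt_nonneg r, fun t ht => ?_⟩
  rw [deriv_add_const', hode t ht, sq_sqrt hr, ← hrot]
  ring
end

section
/- Let α : [0,2π] → ℝ be C² with α'' + ω² sin α = 0 for ω > 0, and suppose α'(2π) = -α'(0) with α'(0) ≠ 0. Then ∫₀^{2π} sin(α(t)) dt = 2α'(0)/ω² ≠ 0, so the associated curve is not closed. -/
open Real intervalIntegral Set

theorem sq_mul_integral_sin_eq_of_pendulum {α : ℝ → ℝ} {ω a b : ℝ} (hα : ContDiff ℝ 2 α)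
    (hpend : ∀ t ∈ uIcc a b, deriv (deriv α) t + ω ^ 2 * sin (α t) = 0) :
    ω ^ 2 * ∫ t in a..b, sin (α t) = deriv α a - deriv α b := by
  have hα' : ContDiff ℝ 1 (deriv α) := (contDiff_succ_iff_deriv.mp hα).2.2
  have hftc : ∫ t in a..b, deriv (deriv α) t = deriv α b - deriv α a :=
    integral_deriv_eq_sub (fun t _ => hα'.differentiable one_ne_zero t)
      ((hα'.continuous_deriv le_rfl).intervalIntegrable a b)
  calc ω ^ 2 * ∫ t in a..b, sin (α t)
      = ∫ t in a..b, -deriv (deriv α) t := by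
        rw [← integral_const_mul]
        exact integral_congr fun t ht => by linarith [hpend t ht]
    _ = deriv α a - deriv α b := by rw [integral_neg, hftc, neg_sub]

theorem pendulum_sin_integral_nonzero_general
    (α : ℝ → ℝ) (ω : ℝ) (hα : ContDiff ℝ 2 α)
    (hpend : ∀ t ∈ Set.Icc (0:ℝ) (2*π),
      deriv (deriv α) t + ω^2 * Real.sin (α t) = 0)
    (hvel : deriv α (2*π) = - deriv α 0) (hne : deriv α 0 ≠ 0) :
    (∫ t in (0:ℝ)..(2*π), Real.sin (α t)) = 2 * deriv α 0 / ω^2 ∧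
    (∫ t in (0:ℝ)..(2*π), Real.sin (α t)) ≠ 0 := by
  have hintegral : ω ^ 2 * ∫ t in (0:ℝ)..(2*π), sin (α t) = 2 * deriv α 0 := by
    rw [sq_mul_integral_sin_eq_of_pendulum hα (by rwa [uIcc_of_le (by positivity)]), hvel]
    ring
  -- `hne` forces `ω ≠ 0`: for `ω = 0` the velocity would be constant.
  have hω : ω ^ 2 ≠ 0 := fun h => hne (by simpa [h] using hintegral.symm)
  refine ⟨by rw [← hintegral, mul_div_cancel_left₀ _ hω], fun h => hne ?_⟩
  simpa [h] using hintegral.symm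

theorem pendulum_sin_integral_nonzero
    (α : ℝ → ℝ) (ω : ℝ) (hω : 0 < ω) (hα : ContDiff ℝ 2 α)
    (hpend : ∀ t ∈ Set.Icc (0:ℝ) (2*π),
      deriv (deriv α) t + ω^2 * Real.sin (α t) = 0)
    (hvel : deriv α (2*π) = - deriv α 0) (hne : deriv α 0 ≠ 0) :
    (∫ t in (0:ℝ)..(2*π), Real.sin (α t)) = 2 * deriv α 0 / ω^2 ∧
    (∫ t in (0:ℝ)..(2*π), Real.sin (α t)) ≠ 0 :=
  pendulum_sin_integral_nonzero_general α ω hα hpend hvel hne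
end
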